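/- Let B be a finite Blaschke product and let z_0 ∈ ℂ be a nonzero critical point of B of multiplicity m with |z_0| ≠ 1. Then 1/conj(z_0) is also a critical point of B of multiplicity m. -/

import Mathlib

open Polynomial Finset

/-! The polynomial `q` is the conjugate reciprocal `reflect (n + 1) p̄` of `p`, and then the
Wronskian `W = wronskian q p` is self-inversive: `reflect (2n + 1) W = X * W̄`, because reversing
coefficients turns `f'` into `(N + 1) f̃ - X f̃'` and thus a Wronskian of reversals into `X` times
a Wronskian. For `a ≠ 0`, reversal moves a root of multiplicity `m` at `a⁻¹` to one at `a`, and
conjugating coefficients moves it from `z₀` to `z̄₀`; the factor `X` does not vanish at `z̄₀`. -/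

namespace Polynomial

section CommRing

variable {R : Type*} [CommRing R]

theorem natDegree_reflect_le_of_le {N : ℕ} {p : R[X]} (hp : p.natDegree ≤ N) :
    (reflect N p).natDegree ≤ N :=
  natDegree_reflect_le.trans (max_le le_rfl hp)

theorem reflect_eq_sum_range {N : ℕ} {p : R[X]} (hp : p.natDegree ≤ N) :
    reflect N p = ∑ k ∈ range (N + 1), C (p.coeff (N - k)) * X ^ k := by
  rw [as_sum_range_C_mul_X_pow' (reflect N p)
    ((natDegree_reflect_le_of_le hp).trans_lt N.lt_succ_self)]
  refine sum_congr rfl fun k hk => ?_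
  rw [coeff_reflect, revAt_le (Nat.lt_succ_iff.mp (mem_range.mp hk))]

theorem reflect_derivative {N : ℕ} {f : R[X]} (hf : f.natDegree ≤ N + 1) :
    reflect N (derivative f) =
      C ((N : R) + 1) * reflect (N + 1) f - X * derivative (reflect (N + 1) f) := by
  ext k
  rw [coeff_sub, coeff_C_mul, coeff_reflect, coeff_reflect]
  rcases k with _ | k
  · simp only [coeff_derivative, mul_coeff_zero, coeff_X_zero, zero_mul, sub_zero,
      revAt_le (Nat.zero_le _), Nat.sub_zero]
    ring
  rw [coeff_X_mul, coeff_derivative, coeff_derivative, coeff_reflect]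
  rcases lt_trichotomy k N with hk | rfl | hk
  · obtain ⟨j, rfl⟩ : ∃ j, N = k + 1 + j := ⟨N - (k + 1), by omega⟩
    rw [revAt_le (by omega), revAt_le (by omega),
      show k + 1 + j - (k + 1) = j by omega, show k + 1 + j + 1 - (k + 1) = j + 1 by omega]
    push_cast
    ring
  · rw [revAt_eq_self_of_lt (by omega), revAt_le le_rfl, Nat.sub_self,
      coeff_eq_zero_of_natDegree_lt (by omega : f.natDegree < k + 1 + 1)]
    ring
  · rw [revAt_eq_self_of_lt (by omega), revAt_eq_self_of_lt (by omega),
      coeff_eq_zero_of_natDegree_lt (by omega : f.natDegree < k + 1 + 1),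
      coeff_eq_zero_of_natDegree_lt (by omega : f.natDegree < k + 1)]
    ring

theorem reflect_wronskian {N : ℕ} {a b : R[X]} (ha : a.natDegree ≤ N + 1)
    (hb : b.natDegree ≤ N + 1) :
    reflect (2 * N + 1) (wronskian a b) =
      X * wronskian (reflect (N + 1) b) (reflect (N + 1) a) := by
  have ha' : (derivative a).natDegree ≤ N := natDegree_derivative_le a |>.trans (by omega)
  have hb' : (derivative b).natDegree ≤ N := natDegree_derivative_le b |>.trans (by omega)
  rw [wronskian, reflect_sub, show 2 * N + 1 = N + 1 + N by ring, reflect_mul _ _ ha hb',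
    reflect_derivative hb, show N + 1 + N = N + (N + 1) by ring, reflect_mul _ _ ha' hb,
    reflect_derivative ha, wronskian]
  ring

theorem natDegree_wronskian_le (a b : R[X]) :
    (wronskian a b).natDegree ≤ a.natDegree + b.natDegree - 1 := by
  rcases eq_or_ne (wronskian a b) 0 with h | h
  · simp [h]
  · have := natDegree_wronskian_lt_add h
    omega

theorem map_wronskian {S : Type*} [CommRing S] (f : R →+* S) (a b : R[X]) :
    (wronskian a b).map f = wronskian (a.map f) (b.map f) := by
  simp only [wronskian, Polynomial.map_sub, Polynomial.map_mul, derivative_map]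

theorem reflect_wronskian_reflect_map {N : ℕ} {p : R[X]} (hp : p.natDegree ≤ N + 1)
    {σ : R →+* R} (hσ : Function.Involutive σ) :
    reflect (2 * N + 1) (wronskian (reflect (N + 1) (p.map σ)) p) =
      X * (wronskian (reflect (N + 1) (p.map σ)) p).map σ := by
  have hmap (f : R[X]) : (f.map σ).map σ = f := by ext k; simp only [coeff_map, hσ _]
  rw [reflect_wronskian (natDegree_reflect_le_of_le (natDegree_map_le.trans hp)) hp,
    reflect_reflect, map_wronskian, reflect_map, hmap]

theorem reflect_X_sub_C_pow (b : R) (k : ℕ) :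
    reflect k ((X - C b) ^ k) = (1 - C b * X) ^ k := by
  induction k with
  | zero => simp
  | succ k ih =>
    have hpow : ((X - C b) ^ k).natDegree ≤ k :=
      (natDegree_pow_le_of_le k (natDegree_X_sub_C_le b)).trans_eq (mul_one k)
    rw [pow_succ, reflect_mul _ _ hpow (natDegree_X_sub_C_le b), ih, reflect_sub, reflect_one_X,
      reflect_C, pow_one, pow_succ]

end CommRing

section Field

variable {K : Type*} [Field K]

theorem X_sub_C_pow_dvd_reflect {N k : ℕ} {P : K[X]} (hP : P.natDegree ≤ N) {a : K}
    (ha : a ≠ 0) (hdvd : (X - C a⁻¹) ^ k ∣ P) : (X - C a) ^ k ∣ reflect N P := by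
  rcases eq_or_ne P 0 with rfl | hP0
  · simp
  obtain ⟨Q, rfl⟩ := hdvd
  have hQ0 : Q ≠ 0 := right_ne_zero_of_mul hP0
  have hdeg : k + Q.natDegree ≤ N := by
    rwa [natDegree_mul (pow_ne_zero _ (X_sub_C_ne_zero _)) hQ0, natDegree_pow,
      natDegree_X_sub_C, mul_one] at hP
  have hfactor : 1 - C a⁻¹ * X = C (-a⁻¹) * (X - C a) := by
    have hinv : C a⁻¹ * C a = 1 := by rw [← C_mul, inv_mul_cancel₀ ha, C_1]
    rw [C_neg]
    linear_combination -hinv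
  rw [show N = k + (N - k) by omega, reflect_mul _ _ ((natDegree_pow_le_of_le k
    (natDegree_X_sub_C_le _)).trans_eq (mul_one k)) (by omega), reflect_X_sub_C_pow, hfactor]
  exact (pow_dvd_pow_of_dvd (dvd_mul_left _ _) k).mul_right _

theorem rootMultiplicity_reflect {N : ℕ} {P : K[X]} (hP : P.natDegree ≤ N) {a : K}
    (ha : a ≠ 0) : (reflect N P).rootMultiplicity a = P.rootMultiplicity a⁻¹ := by
  rcases eq_or_ne P 0 with rfl | hP0
  · simp
  have hR0 : reflect N P ≠ 0 := by rwa [Ne, reflect_eq_zero_iff]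
  apply le_antisymm
  · rw [le_rootMultiplicity_iff hP0]
    simpa using X_sub_C_pow_dvd_reflect (N := N) (natDegree_reflect_le_of_le hP)
      (inv_ne_zero ha) (by simpa using pow_rootMultiplicity_dvd (reflect N P) a)
  · rw [le_rootMultiplicity_iff hR0]
    exact X_sub_C_pow_dvd_reflect hP ha (pow_rootMultiplicity_dvd P a⁻¹)

theorem rootMultiplicity_X_mul {f : K[X]} {a : K} (ha : a ≠ 0) :
    (X * f).rootMultiplicity a = f.rootMultiplicity a := by
  rcases eq_or_ne f 0 with rfl | hf
  · simp
  rw [rootMultiplicity_mul (mul_ne_zero X_ne_zero hf),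
    rootMultiplicity_eq_zero (by simpa using ha), zero_add]

end Field

end Polynomial

theorem blaschke_critical_points_reflection_general (n : ℕ) (p q W : ℂ[X])
    (hdeg : p.natDegree = n + 1)
    (hq : q = ∑ k ∈ range (n + 2), C ((starRingEnd ℂ) (p.coeff (n + 1 - k))) * X ^ k)
    (hW : W = derivative p * q - p * derivative q)
    (z₀ : ℂ) (hz₀ : z₀ ≠ 0)
    (m : ℕ) (hm : W.rootMultiplicity z₀ = m) :
    W.rootMultiplicity (1 / (starRingEnd ℂ) z₀) = m := by
  have hq' : q = reflect (n + 1) (p.map (starRingEnd ℂ)) := by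
    rw [hq, reflect_eq_sum_range (natDegree_map_le.trans hdeg.le)]
    simp only [coeff_map]
  have hWq : W = wronskian q p := by rw [hW, wronskian]; ring
  have hWdeg : W.natDegree ≤ 2 * n + 1 := by
    have hqdeg : q.natDegree ≤ n + 1 :=
      hq' ▸ natDegree_reflect_le_of_le (natDegree_map_le.trans hdeg.le)
    rw [hWq]
    exact (natDegree_wronskian_le q p).trans (by omega)
  have hsym : reflect (2 * n + 1) W = X * W.map (starRingEnd ℂ) := by
    rw [hWq, hq']
    exact reflect_wronskian_reflect_map hdeg.le starRingEnd_self_apply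
  have hz : starRingEnd ℂ z₀ ≠ 0 := (_root_.map_ne_zero _).mpr hz₀
  calc W.rootMultiplicity (1 / starRingEnd ℂ z₀)
      = (reflect (2 * n + 1) W).rootMultiplicity (starRingEnd ℂ z₀) := by
        rw [rootMultiplicity_reflect hWdeg hz, one_div]
    _ = (W.map (starRingEnd ℂ)).rootMultiplicity (starRingEnd ℂ z₀) := by
        rw [hsym, rootMultiplicity_X_mul hz]
    _ = m := by rw [← eq_rootMultiplicity_map (starRingEnd ℂ).injective, hm]

/-- For a finite Blaschke product `B = p/q` of degree `n+1`, where
`q` is the conjugate-reversed polynomial of `p`, `p` and `q` are coprime and all zeros of `p`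
lie in the open unit disk, if `z₀ ≠ 0`, `|z₀| ≠ 1` is a critical point of multiplicity `m`
(i.e. a zero of multiplicity `m` of the Wronskian `W = p'q - pq'`), then `1/conj z₀` is also
a critical point of multiplicity `m`. -/
theorem blaschke_critical_points_reflection (n : ℕ) (p q W : ℂ[X])
    (hdeg : p.natDegree = n + 1)
    (hq : q = ∑ k ∈ range (n + 2), C ((starRingEnd ℂ) (p.coeff (n + 1 - k))) * X ^ k)
    (hcop : IsCoprime p q)
    (hzeros : ∀ z ∈ p.roots, ‖z‖ < 1)
    (hW : W = derivative p * q - p * derivative q)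
    (z₀ : ℂ) (hz₀ : z₀ ≠ 0) (hz₀1 : ‖z₀‖ ≠ 1)
    (m : ℕ) (hm : W.rootMultiplicity z₀ = m) :
    W.rootMultiplicity (1 / (starRingEnd ℂ) z₀) = m :=
  blaschke_critical_points_reflection_general n p q W hdeg hq hW z₀ hz₀ m hm
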